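/- arXiv:2508.14981 — 3 statements merged into one kernel-verified Lean document; each statement's English description precedes it below -/
import Mathlib

section
/- Let (E1, J1, M1) and (E2, J2, M2) be two cartesian double factorization systems on a topos C, and let k1, k2 be the Lawvere–Tierney topologies they generate (k_i = char(m_i), where m_i∘j_i∘e_i is the (E_i, J_i, M_i)-factorization of true : 1 → Ω). Then k1 = k2 if and only if J1·E1 = J2·E2, and also k1 = k2 if and only if M1 = M2. -/
open CategoryTheory CategoryTheory.Limits

universe v u v₂ u₂

namespace DFS

variable {C : Type u} [Category.{v} C]

/-- `f` is (left) orthogonal to `g`: every commutative square from `f` to `g`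
admits a unique diagonal filler. -/
def Orth {A B X Y : C} (f : A ⟶ B) (g : X ⟶ Y) : Prop :=
  ∀ (u : A ⟶ X) (v : B ⟶ Y), u ≫ g = f ≫ v → ∃! h : B ⟶ X, f ≫ h = u ∧ h ≫ g = v

/-- Mutual orthogonality of two classes of morphisms. -/
def ClassOrth (L R : MorphismProperty C) : Prop :=
  ∀ ⦃A B X Y : C⦄ (f : A ⟶ B) (g : X ⟶ Y), L f → R g → Orth f g

/-- The class `R·L` of composites `e ≫ m` with `e ∈ L` and `m ∈ R`. -/
def Comp (R L : MorphismProperty C) : MorphismProperty C :=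
  fun X Y f => ∃ (Z : C) (e : X ⟶ Z) (m : Z ⟶ Y), L e ∧ R m ∧ e ≫ m = f

/-- An object `X` is `L`-local if precomposition with every member of `L` is a
bijection of hom-sets into `X`. -/
def IsLocal (L : MorphismProperty C) (X : C) : Prop :=
  ∀ ⦃A B : C⦄ (m : A ⟶ B), L m → Function.Bijective (fun g : B ⟶ X => m ≫ g)

/-- An object `X` is `L`-separating if precomposition with every member of `L` is an
injection of hom-sets into `X`. -/
def IsSeparating (L : MorphismProperty C) (X : C) : Prop :=
  ∀ ⦃A B : C⦄ (m : A ⟶ B), L m → Function.Injective (fun g : B ⟶ X => m ≫ g)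

/-- A double (orthogonal) factorization system. -/
structure IsDFS (E J M : MorphismProperty C) : Prop where
  postcomp_iso_E : ∀ ⦃A B B' : C⦄ (e : A ⟶ B) (i : B ⟶ B'), IsIso i → E e → E (e ≫ i)
  comp_iso_J : ∀ ⦃A' A B B' : C⦄ (i : A' ⟶ A) (j : A ⟶ B) (i' : B ⟶ B'),
      IsIso i → IsIso i' → J j → J (i ≫ j ≫ i')
  precomp_iso_M : ∀ ⦃A' A B : C⦄ (i : A' ⟶ A) (m : A ⟶ B), IsIso i → M m → M (i ≫ m)
  fac : ∀ ⦃X Y : C⦄ (f : X ⟶ Y), ∃ (A B : C) (e : X ⟶ A) (j : A ⟶ B) (m : B ⟶ Y),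
      E e ∧ J j ∧ M m ∧ e ≫ j ≫ m = f
  lift : ∀ ⦃A B B'' D D' F' : C⦄ (e : A ⟶ B) (j : B ⟶ B'') (j' : D ⟶ D') (m : D' ⟶ F')
      (u : A ⟶ D) (v : B'' ⟶ F'), E e → J j → J j' → M m →
      e ≫ j ≫ v = u ≫ j' ≫ m →
      ∃! st : (B ⟶ D) × (B'' ⟶ D'),
        e ≫ st.1 = u ∧ st.1 ≫ j' = j ≫ st.2 ∧ st.2 ≫ m = v

/-- An (orthogonal) factorization system. -/
structure IsFS (L R : MorphismProperty C) : Prop where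
  fac : ∀ ⦃X Y : C⦄ (f : X ⟶ Y), ∃ (Z : C) (e : X ⟶ Z) (m : Z ⟶ Y), L e ∧ R m ∧ e ≫ m = f
  left_iff : ∀ ⦃A B : C⦄ (f : A ⟶ B), L f ↔ ∀ ⦃X Y : C⦄ (g : X ⟶ Y), R g → Orth f g
  right_iff : ∀ ⦃X Y : C⦄ (g : X ⟶ Y), R g ↔ ∀ ⦃A B : C⦄ (f : A ⟶ B), L f → Orth f g

/-- Stability of a class of morphisms under pullback. -/
def StableUnderPB (P : MorphismProperty C) : Prop :=
  ∀ ⦃A B A' B' : C⦄ (f : A ⟶ B) (g : B' ⟶ B) (f' : A' ⟶ B') (h : A' ⟶ A),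
    IsPullback h f' f g → P f → P f'

/-- A left Quillen functor between categories equipped with dfs's: it maps
trivial cofibrations to trivial cofibrations and cofibrations to cofibrations. -/
def LeftQuillen {D : Type u₂} [Category.{v₂} D]
    (EC JC : MorphismProperty C) (ED JD : MorphismProperty D) (F : C ⥤ D) : Prop :=
  (∀ ⦃A B : C⦄ (f : A ⟶ B), EC f → ED (F.map f)) ∧
  (∀ ⦃A B : C⦄ (f : A ⟶ B), Comp JC EC f → Comp JD ED (F.map f))

end DFS
namespace DFS

variable {C : Type u} [Category.{v} C]

section Topos

variable [HasTerminal C]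

/-- `c : B ⟶ Ω` classifies the morphism `m : A ⟶ B` (relative to the truth arrow
`tr : ⊤ ⟶ Ω`) if the evident square is a pullback. -/
def Classifies (Ω : C) (tr : ⊤_ C ⟶ Ω) {A B : C} (m : A ⟶ B) (c : B ⟶ Ω) : Prop :=
  IsPullback (terminal.from A) m tr c

/-- `(Ω, tr)` is a subobject classifier: every monomorphism has a unique
classifying morphism. -/
def IsClassifier (Ω : C) (tr : ⊤_ C ⟶ Ω) : Prop :=
  ∀ ⦃A B : C⦄ (m : A ⟶ B), Mono m → ∃! c : B ⟶ Ω, Classifies Ω tr m c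

/-- `k : Ω ⟶ Ω` is a Lawvere–Tierney topology: `k ∘ true = true`, `k ∘ k = k` and
`k ∘ ∧ = ∧ ∘ (k × k)`, where `∧ = char(true × true)`. -/
def IsLT [HasBinaryProducts C] (Ω : C) (tr : ⊤_ C ⟶ Ω) (k : Ω ⟶ Ω) : Prop :=
  tr ≫ k = tr ∧ k ≫ k = k ∧
    ∀ meet : Ω ⨯ Ω ⟶ Ω, Classifies Ω tr (prod.lift tr tr) meet →
      meet ≫ k = prod.map k k ≫ meet

/-- `m` is a `k`-dense monomorphism: its characteristic morphism `c` satisfies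
`k ∘ c = true ∘ !`. -/
def IsDense (Ω : C) (tr : ⊤_ C ⟶ Ω) (k : Ω ⟶ Ω) {A B : C} (m : A ⟶ B) : Prop :=
  ∃ c : B ⟶ Ω, Classifies Ω tr m c ∧ c ≫ k = terminal.from B ≫ tr

/-- `m` is a `k`-closed monomorphism: its characteristic morphism `c` satisfies
`k ∘ c = c`. -/
def IsClosed (Ω : C) (tr : ⊤_ C ⟶ Ω) (k : Ω ⟶ Ω) {A B : C} (m : A ⟶ B) : Prop :=
  ∃ c : B ⟶ Ω, Classifies Ω tr m c ∧ c ≫ k = c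

/-- The class of `k`-dense monomorphisms. -/
def denseMonos (Ω : C) (tr : ⊤_ C ⟶ Ω) (k : Ω ⟶ Ω) : MorphismProperty C :=
  fun _ _ m => Mono m ∧ IsDense Ω tr k m

/-- The class of `k`-closed monomorphisms. -/
def closedMonos (Ω : C) (tr : ⊤_ C ⟶ Ω) (k : Ω ⟶ Ω) : MorphismProperty C :=
  fun _ _ m => Mono m ∧ IsClosed Ω tr k m

/-- The class of epimorphisms. -/
def epis : MorphismProperty C := fun _ _ f => Epi f

/-- `X` is a `k`-sheaf: every hom into `X` extends uniquely along `k`-dense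
monomorphisms. -/
def IsSheaf (Ω : C) (tr : ⊤_ C ⟶ Ω) (k : Ω ⟶ Ω) (X : C) : Prop :=
  ∀ ⦃A B : C⦄ (m : A ⟶ B), Mono m → IsDense Ω tr k m →
    Function.Bijective (fun g : B ⟶ X => m ≫ g)

/-- `X` is a `k`-separated object: every hom into `X` extends at most in one way along
`k`-dense monomorphisms. -/
def IsSepObj (Ω : C) (tr : ⊤_ C ⟶ Ω) (k : Ω ⟶ Ω) (X : C) : Prop :=
  ∀ ⦃A B : C⦄ (m : A ⟶ B), Mono m → IsDense Ω tr k m →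
    Function.Injective (fun g : B ⟶ X => m ≫ g)

/-- `n` is the `k`-closure of the monomorphism `m`: `n` is classified by
`k ∘ char m`. -/
def IsClosureOf (Ω : C) (tr : ⊤_ C ⟶ Ω) (k : Ω ⟶ Ω) {A A' B : C}
    (m : A ⟶ B) (n : A' ⟶ B) : Prop :=
  ∃ c : B ⟶ Ω, Classifies Ω tr m c ∧ Classifies Ω tr n (c ≫ k)

/-- A dfs `(E, J, M)` is cartesian: `E` and `J·E` are stable under pullback and
every morphism of `M·J` is a monomorphism. -/
def IsCartesian (E J M : MorphismProperty C) : Prop :=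
  StableUnderPB E ∧ StableUnderPB (Comp J E) ∧
    ∀ ⦃A B : C⦄ (f : A ⟶ B), Comp M J f → Mono f

end Topos

end DFS

/-!
In a dfs `(E, J, M)` the classes `J·E` and `M` are mutually orthogonal and every morphism factors
through them, so each of `J·E` and `M` determines the other; this gives `J₁·E₁ = J₂·E₂ ↔ M₁ = M₂`
for arbitrary dfs's. If the dfs is cartesian and `k` is the topology it generates, pulling back
the factorization of `true` along the characteristic map of a mono `n` factors `n` as a `J·E`-map
followed by the `k`-closure of `n`, which lies in `M`. Hence a mono is in `J·E` iff it is
`k`-dense, so `k` determines `M`; conversely `M` and `J·E` determine the factorization of `true`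
up to isomorphism, hence `k`.
-/

namespace DFS

variable {C : Type u} [Category.{v} C]

section Orthogonality

variable {A B X Y : C}

theorem Orth.hom_ext {f : A ⟶ B} {g : X ⟶ Y} (hfg : Orth f g) {h₁ h₂ : B ⟶ X}
    (hf : f ≫ h₁ = f ≫ h₂) (hg : h₁ ≫ g = h₂ ≫ g) : h₁ = h₂ :=
  (hfg (f ≫ h₁) (h₁ ≫ g) (Category.assoc _ _ _)).unique ⟨rfl, rfl⟩ ⟨hf.symm, hg.symm⟩

theorem isIso_left_of_orth_comp {w : A ⟶ B} {m : B ⟶ Y} (hwm : Orth w m)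
    (hw : Orth w (w ≫ m)) : IsIso w := by
  obtain ⟨g, ⟨hwg, hgm⟩, -⟩ := hw (𝟙 A) m (by simp)
  exact ⟨g, hwg, hwm.hom_ext (by simp [reassoc_of% hwg]) (by simpa using hgm)⟩

theorem isIso_right_of_comp_orth {w : A ⟶ B} {m : B ⟶ Y} (hwm : Orth w m)
    (hm : Orth (w ≫ m) m) : IsIso m := by
  obtain ⟨g, ⟨hwg, hgm⟩, -⟩ := hm w (𝟙 Y) (by simp)
  exact ⟨g, hwm.hom_ext (by simpa using hwg) (by simp [hgm]), hgm⟩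

theorem Orth.of_isPullback {w : A ⟶ B} {f : X ⟶ Y} (hwf : Orth w f) {X' Y' : C}
    {f' : X' ⟶ Y'} {h : X' ⟶ X} {g : Y' ⟶ Y} (hP : IsPullback h f' f g) : Orth w f' := by
  intro u v huv
  obtain ⟨l, ⟨hwl, hlf⟩, hl⟩ := hwf (u ≫ h) (v ≫ g) (by
    rw [Category.assoc, hP.w, reassoc_of% huv])
  refine ⟨hP.lift l v hlf, ⟨hP.hom_ext (by simpa using hwl) (by simpa using huv.symm),
    hP.lift_snd _ _ _⟩, fun y ⟨hwy, hyf⟩ => hP.hom_ext ?_ (by simpa using hyf)⟩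
  rw [hP.lift_fst]
  exact hl _ ⟨by rw [← hwy, Category.assoc], by rw [Category.assoc, hP.w, reassoc_of% hyf]⟩

end Orthogonality

namespace IsDFS

variable {E J M : MorphismProperty C} (h : IsDFS E J M)
include h

theorem J_id (X : C) : J (𝟙 X) := by
  obtain ⟨A, B, e, j, m, he, hj, hm, hfac⟩ := h.fac (𝟙 X)
  obtain ⟨st, -, huniq⟩ := h.lift e j j m e m he hj hj hm rfl
  have hid : ((𝟙 A, 𝟙 B) : (A ⟶ A) × (B ⟶ B)) = st := huniq _ ⟨by simp, by simp, by simp⟩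
  have hloop : ((j ≫ m ≫ e, m ≫ e ≫ j) : (A ⟶ A) × (B ⟶ B)) = st :=
    huniq _ ⟨by simp [reassoc_of% hfac], by simp, by simp [hfac]⟩
  have hs : j ≫ m ≫ e = 𝟙 A := congrArg Prod.fst (hloop.trans hid.symm)
  have ht : m ≫ e ≫ j = 𝟙 B := congrArg Prod.snd (hloop.trans hid.symm)
  have he : IsIso e := ⟨j ≫ m, hfac, by simpa using hs⟩
  have hm : IsIso m := ⟨e ≫ j, ht, by simpa using hfac⟩
  simpa [hfac] using h.comp_iso_J e j m he hm hj

theorem fac_comp {X Y : C} (f : X ⟶ Y) :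
    ∃ (Z : C) (w : X ⟶ Z) (m : Z ⟶ Y), Comp J E w ∧ M m ∧ w ≫ m = f := by
  obtain ⟨A, B, e, j, m, he, hj, hm, rfl⟩ := h.fac f
  exact ⟨B, e ≫ j, m, ⟨A, e, j, he, hj, rfl⟩, hm, Category.assoc _ _ _⟩

theorem orth {P Q X Y : C} {f : P ⟶ Q} {m : X ⟶ Y} (hf : Comp J E f) (hm : M m) :
    Orth f m := by
  obtain ⟨Z, e, j, he, hj, rfl⟩ := hf
  intro u v huv
  obtain ⟨st, ⟨hs₁, hs₂, hs₃⟩, huniq⟩ :=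
    h.lift e j (𝟙 X) m u v he hj (h.J_id X) hm (by simpa using huv.symm)
  have hs : st.1 = j ≫ st.2 := by simpa using hs₂
  refine ⟨st.2, ⟨by rw [Category.assoc, ← hs, hs₁], hs₃⟩, fun y ⟨hy₁, hy₂⟩ => ?_⟩
  exact congrArg Prod.snd (huniq (j ≫ y, y) ⟨by simpa using hy₁, by simp, hy₂⟩)

theorem JE_comp_iso {X Y Y' : C} {f : X ⟶ Y} (hf : Comp J E f) (i : Y ⟶ Y') [IsIso i] :
    Comp J E (f ≫ i) := by
  obtain ⟨Z, e, j, he, hj, rfl⟩ := hf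
  exact ⟨Z, e, j ≫ i, he, by simpa using h.comp_iso_J (𝟙 Z) j i inferInstance inferInstance hj,
    (Category.assoc _ _ _).symm⟩

theorem stableUnderPB_M : StableUnderPB M := by
  intro X Y X' Y' f g f' t hP hf
  obtain ⟨Z, w, m, hw, hm, rfl⟩ := h.fac_comp f'
  have : IsIso w := isIso_left_of_orth_comp (h.orth hw hm) ((h.orth hw hf).of_isPullback hP)
  exact h.precomp_iso_M w m this hm

theorem exists_iso_of_fac {X Y Z Z' : C} {w : X ⟶ Z} {m : Z ⟶ Y} {w' : X ⟶ Z'} {m' : Z' ⟶ Y}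
    (hw : Comp J E w) (hm : M m) (hw' : Comp J E w') (hm' : M m') (hfac : w ≫ m = w' ≫ m') :
    ∃ θ : Z ⟶ Z', IsIso θ ∧ θ ≫ m' = m := by
  obtain ⟨θ, ⟨hwθ, hθm⟩, -⟩ := h.orth hw hm' w' m hfac.symm
  obtain ⟨θ', ⟨hwθ', hθ'm⟩, -⟩ := h.orth hw' hm w m' hfac
  refine ⟨θ, ⟨θ', ?_, ?_⟩, hθm⟩
  · exact (h.orth hw hm).hom_ext (by simp [reassoc_of% hwθ, hwθ']) (by simp [hθ'm, hθm])
  · exact (h.orth hw' hm').hom_ext (by simp [reassoc_of% hwθ', hwθ]) (by simp [hθm, hθ'm])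

end IsDFS

theorem IsCartesian.mono {E J M : MorphismProperty C} (hc : IsCartesian E J M)
    (h : IsDFS E J M) {X Y : C} {m : X ⟶ Y} (hm : M m) : Mono m :=
  hc.2.2 m ⟨X, 𝟙 X, m, h.J_id X, hm, Category.id_comp m⟩

section TwoDFS

variable {E₁ J₁ M₁ E₂ J₂ M₂ : MorphismProperty C} (h₁ : IsDFS E₁ J₁ M₁) (h₂ : IsDFS E₂ J₂ M₂)
include h₁ h₂

theorem JE_le_of_M_le (hM : M₂ ≤ M₁) : Comp J₁ E₁ ≤ Comp J₂ E₂ := by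
  intro X Y f hf
  obtain ⟨Z, w, m, hw, hm, rfl⟩ := h₂.fac_comp f
  have : IsIso m := isIso_right_of_comp_orth (h₂.orth hw hm) (h₁.orth hf (hM m hm))
  exact h₂.JE_comp_iso hw m

theorem M_le_of_JE_le (hJE : Comp J₂ E₂ ≤ Comp J₁ E₁) : M₁ ≤ M₂ := by
  intro X Y f hf
  obtain ⟨Z, w, m, hw, hm, rfl⟩ := h₂.fac_comp f
  have : IsIso w := isIso_left_of_orth_comp (h₂.orth hw hm) (h₁.orth (hJE w hw) hf)
  exact h₂.precomp_iso_M w m this hm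

theorem M_eq_iff_JE_eq : M₁ = M₂ ↔ Comp J₁ E₁ = Comp J₂ E₂ :=
  ⟨fun hM => le_antisymm (JE_le_of_M_le h₁ h₂ hM.ge) (JE_le_of_M_le h₂ h₁ hM.le),
    fun hJE => le_antisymm (M_le_of_JE_le h₁ h₂ hJE.ge) (M_le_of_JE_le h₂ h₁ hJE.le)⟩

end TwoDFS

section Topos

variable [HasFiniteLimits C] {Ω : C} {tr : ⊤_ C ⟶ Ω}

theorem Classifies.iso_comp {U U' V : C} {n : U ⟶ V} {c : V ⟶ Ω} (hn : Classifies Ω tr n c)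
    (i : U' ⟶ U) [IsIso i] : Classifies Ω tr (i ≫ n) c := by
  have hi : IsPullback (terminal.from U') i (𝟙 (⊤_ C)) (terminal.from U) :=
    IsPullback.of_vert_isIso ⟨Subsingleton.elim _ _⟩
  simpa [Classifies] using hi.paste_vert hn

theorem classifies_id (tr : ⊤_ C ⟶ Ω) (V : C) :
    Classifies Ω tr (𝟙 V) (terminal.from V ≫ tr) := by
  have : Mono tr := ⟨fun _ _ _ => Subsingleton.elim _ _⟩
  have hV : IsPullback (terminal.from V) (𝟙 V) (𝟙 (⊤_ C)) (terminal.from V) :=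
    IsPullback.of_vert_isIso ⟨Subsingleton.elim _ _⟩
  simpa [Classifies] using hV.paste_horiz (IsKernelPair.id_of_mono tr)

theorem Classifies.isIso_iff (hΩ : IsClassifier Ω tr) {U V : C} {n : U ⟶ V} {c : V ⟶ Ω}
    (hn : Classifies Ω tr n c) : IsIso n ↔ c = terminal.from V ≫ tr := by
  constructor
  · intro
    have hid : Classifies Ω tr (𝟙 V) c := by simpa using hn.iso_comp (inv n)
    exact (hΩ (𝟙 V) inferInstance).unique hid (classifies_id tr V)
  · rintro rfl
    have hiso : (IsPullback.isoIsPullback _ _ hn (classifies_id tr V)).hom = n := by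
      simpa using IsPullback.isoIsPullback_hom_snd _ _ hn (classifies_id tr V)
    rw [← hiso]
    infer_instance

/-- The topology generated by a dfs `(E, J, M)` is the case `L = J·E`, `R = M`. -/
def GeneratesTopology (Ω : C) (tr : ⊤_ C ⟶ Ω) (L R : MorphismProperty C) (k : Ω ⟶ Ω) : Prop :=
  ∃ (B : C) (w : ⊤_ C ⟶ B) (m : B ⟶ Ω), L w ∧ R m ∧ w ≫ m = tr ∧ Classifies Ω tr m k

variable {E J M : MorphismProperty C} (h : IsDFS E J M) (hc : IsCartesian E J M)
  {k : Ω ⟶ Ω} (hk : GeneratesTopology Ω tr (Comp J E) M k)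
include h hc hk

theorem exists_fac_closure {U V : C} {n : U ⟶ V} {d : V ⟶ Ω} (hn : Classifies Ω tr n d) :
    ∃ (W : C) (q : U ⟶ W) (n' : W ⟶ V),
      Comp J E q ∧ M n' ∧ q ≫ n' = n ∧ Classifies Ω tr n' (d ≫ k) := by
  obtain ⟨B, w, m, hw, hm, hfac, hk⟩ := hk
  have hPB : IsPullback (pullback.fst m d) (pullback.snd m d) m d := .of_hasPullback m d
  have hsq : (terminal.from U ≫ w) ≫ m = n ≫ d := by rw [Category.assoc, hfac, hn.w]
  have hq : IsPullback (terminal.from U) (pullback.lift _ _ hsq) w (pullback.fst m d) :=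
    IsPullback.of_bot (by rw [pullback.lift_snd, hfac]; exact hn) (pullback.lift_fst _ _ _).symm hPB
  refine ⟨_, _, pullback.snd m d, hc.2.1 _ _ _ _ hq hw,
    h.stableUnderPB_M _ _ _ _ hPB hm, pullback.lift_snd _ _ _, ?_⟩
  simpa only [Classifies, terminal.comp_from] using hPB.paste_horiz hk

theorem JE_iff_dense (hΩ : IsClassifier Ω tr) {U V : C} {n : U ⟶ V} {d : V ⟶ Ω}
    (hn : Classifies Ω tr n d) : Comp J E n ↔ d ≫ k = terminal.from V ≫ tr := by
  obtain ⟨W, q, n', hq, hn', rfl, hcl⟩ := exists_fac_closure h hc hk hn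
  rw [← hcl.isIso_iff hΩ]
  exact ⟨fun hn => isIso_right_of_comp_orth (h.orth hq hn') (h.orth hn hn'),
    fun _ => h.JE_comp_iso hq n'⟩

end Topos

section TwoTopos

variable [HasFiniteLimits C] {Ω : C} {tr : ⊤_ C ⟶ Ω} (hΩ : IsClassifier Ω tr)
include hΩ

theorem GeneratesTopology.unique {E J M : MorphismProperty C} (h : IsDFS E J M)
    (hc : IsCartesian E J M) {k k' : Ω ⟶ Ω} (hk : GeneratesTopology Ω tr (Comp J E) M k)
    (hk' : GeneratesTopology Ω tr (Comp J E) M k') : k = k' := by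
  obtain ⟨B, w, m, hw, hm, hfac, hk⟩ := hk
  obtain ⟨B', w', m', hw', hm', hfac', hk'⟩ := hk'
  obtain ⟨θ, _, rfl⟩ := h.exists_iso_of_fac hw hm hw' hm' (hfac.trans hfac'.symm)
  exact (hΩ _ (hc.mono h hm)).unique hk (hk'.iso_comp θ)

theorem M_le_of_generatesTopology {E₁ J₁ M₁ E₂ J₂ M₂ : MorphismProperty C}
    (h₁ : IsDFS E₁ J₁ M₁) (hc₁ : IsCartesian E₁ J₁ M₁)
    (h₂ : IsDFS E₂ J₂ M₂) (hc₂ : IsCartesian E₂ J₂ M₂) {k : Ω ⟶ Ω}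
    (hk₁ : GeneratesTopology Ω tr (Comp J₁ E₁) M₁ k)
    (hk₂ : GeneratesTopology Ω tr (Comp J₂ E₂) M₂ k) : M₁ ≤ M₂ := by
  intro X Y f hf
  obtain ⟨Z, w, m, hw, hm, rfl⟩ := h₂.fac_comp f
  have : Mono (w ≫ m) := hc₁.mono h₁ hf
  obtain ⟨d, hd, -⟩ := hΩ w (mono_of_mono w m)
  have hw₁ : Comp J₁ E₁ w :=
    (JE_iff_dense h₁ hc₁ hk₁ hΩ hd).2 ((JE_iff_dense h₂ hc₂ hk₂ hΩ hd).1 hw)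
  have : IsIso w := isIso_left_of_orth_comp (h₂.orth hw hm) (h₁.orth hw₁ hf)
  exact h₂.precomp_iso_M w m this hm

end TwoTopos

end DFS

theorem statement13_general {C : Type u} [Category.{v} C] [HasFiniteLimits C]
    (Ω : C) (tr : ⊤_ C ⟶ Ω) (hΩ : DFS.IsClassifier Ω tr)
    (E₁ J₁ M₁ : MorphismProperty C) (h₁ : DFS.IsDFS E₁ J₁ M₁)
    (hc₁ : DFS.IsCartesian E₁ J₁ M₁)
    (E₂ J₂ M₂ : MorphismProperty C) (h₂ : DFS.IsDFS E₂ J₂ M₂)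
    (hc₂ : DFS.IsCartesian E₂ J₂ M₂)
    (A₁ B₁ : C) (e₁ : ⊤_ C ⟶ A₁) (j₁ : A₁ ⟶ B₁) (m₁ : B₁ ⟶ Ω)
    (he₁ : E₁ e₁) (hj₁ : J₁ j₁) (hm₁ : M₁ m₁) (hfac₁ : e₁ ≫ j₁ ≫ m₁ = tr)
    (k₁ : Ω ⟶ Ω) (hk₁ : DFS.Classifies Ω tr m₁ k₁)
    (A₂ B₂ : C) (e₂ : ⊤_ C ⟶ A₂) (j₂ : A₂ ⟶ B₂) (m₂ : B₂ ⟶ Ω)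
    (he₂ : E₂ e₂) (hj₂ : J₂ j₂) (hm₂ : M₂ m₂) (hfac₂ : e₂ ≫ j₂ ≫ m₂ = tr)
    (k₂ : Ω ⟶ Ω) (hk₂ : DFS.Classifies Ω tr m₂ k₂) :
    (k₁ = k₂ ↔ DFS.Comp J₁ E₁ = DFS.Comp J₂ E₂) ∧
    (k₁ = k₂ ↔ M₁ = M₂) := by
  have hg₁ : DFS.GeneratesTopology Ω tr (DFS.Comp J₁ E₁) M₁ k₁ :=
    ⟨B₁, e₁ ≫ j₁, m₁, ⟨A₁, e₁, j₁, he₁, hj₁, rfl⟩, hm₁, by simpa using hfac₁, hk₁⟩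
  have hg₂ : DFS.GeneratesTopology Ω tr (DFS.Comp J₂ E₂) M₂ k₂ :=
    ⟨B₂, e₂ ≫ j₂, m₂, ⟨A₂, e₂, j₂, he₂, hj₂, rfl⟩, hm₂, by simpa using hfac₂, hk₂⟩
  have hMJE := DFS.M_eq_iff_JE_eq h₁ h₂
  have hkM : k₁ = k₂ ↔ M₁ = M₂ := by
    refine ⟨?_, fun hM => ?_⟩
    · rintro rfl
      exact le_antisymm (DFS.M_le_of_generatesTopology hΩ h₁ hc₁ h₂ hc₂ hg₁ hg₂)
        (DFS.M_le_of_generatesTopology hΩ h₂ hc₂ h₁ hc₁ hg₂ hg₁)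
    · rw [hM, hMJE.mp hM] at hg₁
      exact hg₁.unique hΩ h₂ hc₂ hg₂
  exact ⟨hkM.trans hMJE, hkM⟩

/-- Let `(E₁, J₁, M₁)` and `(E₂, J₂, M₂)` be cartesian dfs's on a
topos `C` generating Lawvere–Tierney topologies `k₁`, `k₂` (the characteristic
morphisms of the `M`-parts of the factorizations of `true`).  Then `k₁ = k₂` iff
`J₁·E₁ = J₂·E₂`, and also `k₁ = k₂` iff `M₁ = M₂`. -/
theorem statement13 {C : Type u} [Category.{v} C] [HasFiniteLimits C]
    [CartesianMonoidalCategory C] [MonoidalClosed C]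
    (Ω : C) (tr : ⊤_ C ⟶ Ω) (hΩ : DFS.IsClassifier Ω tr)
    (E₁ J₁ M₁ : MorphismProperty C) (h₁ : DFS.IsDFS E₁ J₁ M₁)
    (hc₁ : DFS.IsCartesian E₁ J₁ M₁)
    (E₂ J₂ M₂ : MorphismProperty C) (h₂ : DFS.IsDFS E₂ J₂ M₂)
    (hc₂ : DFS.IsCartesian E₂ J₂ M₂)
    (A₁ B₁ : C) (e₁ : ⊤_ C ⟶ A₁) (j₁ : A₁ ⟶ B₁) (m₁ : B₁ ⟶ Ω)
    (he₁ : E₁ e₁) (hj₁ : J₁ j₁) (hm₁ : M₁ m₁) (hfac₁ : e₁ ≫ j₁ ≫ m₁ = tr)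
    (k₁ : Ω ⟶ Ω) (hk₁ : DFS.Classifies Ω tr m₁ k₁)
    (A₂ B₂ : C) (e₂ : ⊤_ C ⟶ A₂) (j₂ : A₂ ⟶ B₂) (m₂ : B₂ ⟶ Ω)
    (he₂ : E₂ e₂) (hj₂ : J₂ j₂) (hm₂ : M₂ m₂) (hfac₂ : e₂ ≫ j₂ ≫ m₂ = tr)
    (k₂ : Ω ⟶ Ω) (hk₂ : DFS.Classifies Ω tr m₂ k₂) :
    (k₁ = k₂ ↔ DFS.Comp J₁ E₁ = DFS.Comp J₂ E₂) ∧
    (k₁ = k₂ ↔ M₁ = M₂) :=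
  statement13_general Ω tr hΩ E₁ J₁ M₁ h₁ hc₁ E₂ J₂ M₂ h₂ hc₂ A₁ B₁ e₁ j₁ m₁ he₁ hj₁ hm₁ hfac₁ k₁
    hk₁ A₂ B₂ e₂ j₂ m₂ he₂ hj₂ hm₂ hfac₂ k₂ hk₂
end

section
/- Let (E1, J1, M1) and (E2, J2, M2) be cartesian double factorization systems on toposes C1 and C2 respectively, generating Lawvere–Tierney topologies k1 and k2, and let F ⊣ G with F : C1 → C2 be a Quillen adjunction. If F preserves finite limits, then G maps k2-sheaves to k1-sheaves and maps k2-separating objects to k1-separating objects. -/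
open CategoryTheory CategoryTheory.Limits

universe v u v₂ u₂

/-!
A topology generated by a cartesian dfs has exactly the monomorphisms of `J·E` as its dense
monomorphisms: `c ≫ k = true` says that `c` factors through `m₁`, and the `(E, J, M)`-lifting
property against `j₁ ≫ m₁` produces such a factorization for `m ∈ J·E`; conversely a dense `m`
is a pullback of `e₁ ≫ j₁ ∈ J·E`. A Quillen functor preserving finite limits therefore preserves
dense monomorphisms, and by adjunction extension problems for `G X` along `m` are extension
problems for `X` along `F m`.
-/

namespace DFS

section

variable {C : Type*} [Category C] [HasTerminal C] {Ω : C} {tr : ⊤_ C ⟶ Ω}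

theorem Classifies.mono {A B : C} {n : A ⟶ B} {c : B ⟶ Ω} (hc : Classifies Ω tr n c) :
    Mono n :=
  hc.mono_snd_of_mono (terminalIsTerminal.mono_from tr)

theorem Classifies.comp_eq_true_iff_exists_lift {A B Y : C} {n : A ⟶ B} {k : B ⟶ Ω}
    (hk : Classifies Ω tr n k) (c : Y ⟶ B) :
    c ≫ k = terminal.from Y ≫ tr ↔ ∃ u : Y ⟶ A, u ≫ n = c := by
  constructor
  · intro h
    exact ⟨hk.lift (terminal.from Y) c h.symm, hk.lift_snd _ _ _⟩
  · rintro ⟨u, rfl⟩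
    rw [Category.assoc, ← hk.w, ← Category.assoc, terminal.comp_from]

variable {E J M : MorphismProperty C} {A₁ B₁ : C} {e₁ : ⊤_ C ⟶ A₁} {j₁ : A₁ ⟶ B₁}
  {m₁ : B₁ ⟶ Ω} {k : Ω ⟶ Ω}

theorem isDense_of_mem_comp (hΩ : IsClassifier Ω tr) (h : IsDFS E J M) (hj₁ : J j₁)
    (hm₁ : M m₁) (hfac : e₁ ≫ j₁ ≫ m₁ = tr) (hk : Classifies Ω tr m₁ k)
    {A B : C} (m : A ⟶ B) [Mono m] (hm : Comp J E m) : IsDense Ω tr k m := by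
  obtain ⟨c, hc, -⟩ := hΩ m inferInstance
  obtain ⟨Z, e, j, he, hj, rfl⟩ := hm
  have sq : e ≫ j ≫ c = (terminal.from A ≫ e₁) ≫ j₁ ≫ m₁ := by
    rw [← Category.assoc, ← hc.w, Category.assoc, hfac]
  obtain ⟨st, ⟨-, -, hst⟩, -⟩ := h.lift e j j₁ m₁ _ c he hj hj₁ hm₁ sq
  exact ⟨c, hc, (hk.comp_eq_true_iff_exists_lift c).2 ⟨st.2, hst⟩⟩

theorem mem_comp_of_isDense (hstable : StableUnderPB (Comp J E)) (he₁ : E e₁) (hj₁ : J j₁)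
    (hfac : e₁ ≫ j₁ ≫ m₁ = tr) (hk : Classifies Ω tr m₁ k)
    {A B : C} {m : A ⟶ B} (hd : IsDense Ω tr k m) : Comp J E m := by
  obtain ⟨c, hc, hck⟩ := hd
  obtain ⟨u, rfl⟩ := (hk.comp_eq_true_iff_exists_lift c).1 hck
  have := hk.mono
  have outer : IsPullback (terminal.from A) (m ≫ 𝟙 B) ((e₁ ≫ j₁) ≫ m₁) (u ≫ m₁) := by
    rw [Category.comp_id, Category.assoc, hfac]
    exact hc
  have hsq : terminal.from A ≫ e₁ ≫ j₁ = m ≫ u := by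
    rw [← cancel_mono m₁]
    simpa [hfac] using hc.w
  have hpb : IsPullback (terminal.from A) m (e₁ ≫ j₁) u :=
    outer.of_bot hsq (IsPullback.of_vert_isIso_mono ⟨by simp⟩)
  exact hstable _ u m _ hpb ⟨A₁, e₁, j₁, he₁, hj₁, rfl⟩

end

end DFS

namespace CategoryTheory.Adjunction

variable {C D : Type*} [Category C] [Category D] {F : C ⥤ D} {G : D ⥤ C}

theorem precomp_eq (adj : F ⊣ G) {A B : C} (m : A ⟶ B) (X : D) :
    (fun g : B ⟶ G.obj X => m ≫ g) =
      adj.homEquiv A X ∘ (fun g : F.obj B ⟶ X => F.map m ≫ g) ∘ (adj.homEquiv B X).symm := by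
  funext g
  simp [adj.homEquiv_naturality_left]

theorem bijective_precomp_iff (adj : F ⊣ G) {A B : C} (m : A ⟶ B) (X : D) :
    Function.Bijective (fun g : B ⟶ G.obj X => m ≫ g) ↔
      Function.Bijective (fun g : F.obj B ⟶ X => F.map m ≫ g) := by
  rw [adj.precomp_eq, Equiv.comp_bijective, Equiv.bijective_comp]

theorem injective_precomp_iff (adj : F ⊣ G) {A B : C} (m : A ⟶ B) (X : D) :
    Function.Injective (fun g : B ⟶ G.obj X => m ≫ g) ↔
      Function.Injective (fun g : F.obj B ⟶ X => F.map m ≫ g) := by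
  rw [adj.precomp_eq, Equiv.comp_injective, Equiv.injective_comp]

end CategoryTheory.Adjunction

theorem statement14_general {C₁ : Type u} [Category.{v} C₁] [HasFiniteLimits C₁]
    {C₂ : Type u₂} [Category.{v₂} C₂] [HasFiniteLimits C₂]
    (Ω₁ : C₁) (tr₁ : ⊤_ C₁ ⟶ Ω₁)
    (Ω₂ : C₂) (tr₂ : ⊤_ C₂ ⟶ Ω₂) (hΩ₂ : DFS.IsClassifier Ω₂ tr₂)
    (E₁ J₁ M₁ : MorphismProperty C₁)
    (hc₁ : DFS.IsCartesian E₁ J₁ M₁)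
    (E₂ J₂ M₂ : MorphismProperty C₂) (h₂ : DFS.IsDFS E₂ J₂ M₂)
    (A₁ B₁ : C₁) (e₁ : ⊤_ C₁ ⟶ A₁) (j₁ : A₁ ⟶ B₁) (m₁ : B₁ ⟶ Ω₁)
    (he₁ : E₁ e₁) (hj₁ : J₁ j₁) (hfac₁ : e₁ ≫ j₁ ≫ m₁ = tr₁)
    (k₁ : Ω₁ ⟶ Ω₁) (hk₁ : DFS.Classifies Ω₁ tr₁ m₁ k₁)
    (A₂ B₂ : C₂) (e₂ : ⊤_ C₂ ⟶ A₂) (j₂ : A₂ ⟶ B₂) (m₂ : B₂ ⟶ Ω₂)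
    (hj₂ : J₂ j₂) (hm₂ : M₂ m₂) (hfac₂ : e₂ ≫ j₂ ≫ m₂ = tr₂)
    (k₂ : Ω₂ ⟶ Ω₂) (hk₂ : DFS.Classifies Ω₂ tr₂ m₂ k₂)
    (F : C₁ ⥤ C₂) (G : C₂ ⥤ C₁) (adj : F ⊣ G)
    (hQuillen : DFS.LeftQuillen E₁ J₁ E₂ J₂ F) [PreservesFiniteLimits F] :
    (∀ X : C₂, DFS.IsSheaf Ω₂ tr₂ k₂ X → DFS.IsSheaf Ω₁ tr₁ k₁ (G.obj X)) ∧
    (∀ X : C₂, DFS.IsSepObj Ω₂ tr₂ k₂ X → DFS.IsSepObj Ω₁ tr₁ k₁ (G.obj X)) := by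
  have map_isDense : ∀ ⦃A B : C₁⦄ (m : A ⟶ B) [Mono m], DFS.IsDense Ω₁ tr₁ k₁ m →
      DFS.IsDense Ω₂ tr₂ k₂ (F.map m) := fun _ _ m _ hd =>
    DFS.isDense_of_mem_comp hΩ₂ h₂ hj₂ hm₂ hfac₂ hk₂ (F.map m)
      (hQuillen.2 m (DFS.mem_comp_of_isDense hc₁.2.1 he₁ hj₁ hfac₁ hk₁ hd))
  exact ⟨fun X hX _ _ m _ hd => (adj.bijective_precomp_iff m X).2
      (hX _ inferInstance (map_isDense m hd)),
    fun X hX _ _ m _ hd => (adj.injective_precomp_iff m X).2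
      (hX _ inferInstance (map_isDense m hd))⟩

/-- Let `(E₁, J₁, M₁)`, `(E₂, J₂, M₂)` be cartesian dfs's on toposes
`C₁`, `C₂` generating LT-topologies `k₁`, `k₂`, and let `F ⊣ G` be a Quillen
adjunction whose left adjoint preserves finite limits (a geometric morphism).
Then `G` maps `k₂`-sheaves to `k₁`-sheaves and `k₂`-separating objects to
`k₁`-separating objects. -/
theorem statement14 {C₁ : Type u} [Category.{v} C₁] [HasFiniteLimits C₁]
    [CartesianMonoidalCategory C₁] [MonoidalClosed C₁]
    {C₂ : Type u₂} [Category.{v₂} C₂] [HasFiniteLimits C₂]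
    [CartesianMonoidalCategory C₂] [MonoidalClosed C₂]
    (Ω₁ : C₁) (tr₁ : ⊤_ C₁ ⟶ Ω₁) (hΩ₁ : DFS.IsClassifier Ω₁ tr₁)
    (Ω₂ : C₂) (tr₂ : ⊤_ C₂ ⟶ Ω₂) (hΩ₂ : DFS.IsClassifier Ω₂ tr₂)
    (E₁ J₁ M₁ : MorphismProperty C₁) (h₁ : DFS.IsDFS E₁ J₁ M₁)
    (hc₁ : DFS.IsCartesian E₁ J₁ M₁)
    (E₂ J₂ M₂ : MorphismProperty C₂) (h₂ : DFS.IsDFS E₂ J₂ M₂)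
    (hc₂ : DFS.IsCartesian E₂ J₂ M₂)
    (A₁ B₁ : C₁) (e₁ : ⊤_ C₁ ⟶ A₁) (j₁ : A₁ ⟶ B₁) (m₁ : B₁ ⟶ Ω₁)
    (he₁ : E₁ e₁) (hj₁ : J₁ j₁) (hm₁ : M₁ m₁) (hfac₁ : e₁ ≫ j₁ ≫ m₁ = tr₁)
    (k₁ : Ω₁ ⟶ Ω₁) (hk₁ : DFS.Classifies Ω₁ tr₁ m₁ k₁)
    (A₂ B₂ : C₂) (e₂ : ⊤_ C₂ ⟶ A₂) (j₂ : A₂ ⟶ B₂) (m₂ : B₂ ⟶ Ω₂)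
    (he₂ : E₂ e₂) (hj₂ : J₂ j₂) (hm₂ : M₂ m₂) (hfac₂ : e₂ ≫ j₂ ≫ m₂ = tr₂)
    (k₂ : Ω₂ ⟶ Ω₂) (hk₂ : DFS.Classifies Ω₂ tr₂ m₂ k₂)
    (F : C₁ ⥤ C₂) (G : C₂ ⥤ C₁) (adj : F ⊣ G)
    (hQuillen : DFS.LeftQuillen E₁ J₁ E₂ J₂ F) [PreservesFiniteLimits F] :
    (∀ X : C₂, DFS.IsSheaf Ω₂ tr₂ k₂ X → DFS.IsSheaf Ω₁ tr₁ k₁ (G.obj X)) ∧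
    (∀ X : C₂, DFS.IsSepObj Ω₂ tr₂ k₂ X → DFS.IsSepObj Ω₁ tr₁ k₁ (G.obj X)) :=
  statement14_general Ω₁ tr₁ Ω₂ tr₂ hΩ₂ E₁ J₁ M₁ hc₁ E₂ J₂ M₂ h₂ A₁ B₁ e₁ j₁ m₁ he₁ hj₁ hfac₁ k₁ hk₁
    A₂ B₂ e₂ j₂ m₂ hj₂ hm₂ hfac₂ k₂ hk₂ F G adj hQuillen
end

section
/- Let G be a compact topological group, regarded as a uniform space with its unique compatible uniformity U_G (which is totally bounded and complete). Consider the monad H^u = (H^u, η^u, μ^u) on the category Unif of uniform spaces, where H^u(X, U) = (G, U_G) × (X, U) and H^u(f) = 1_G × f, the unit is η^u_X(x) = (e, x) and the multiplication is μ^u_X(g1, (g2, x)) = (g1·g2, x). Then the Eilenberg–Moore category Unif^{H^u} of H^u-algebras (uniform spaces with a uniformly continuous action of G, and uniformly continuous equivariant maps) has all small colimits, i.e. it is cocomplete. -/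
open CategoryTheory CategoryTheory.Limits

universe u

namespace DFS

variable (G : Type u) [Group G] [UniformSpace G] [IsUniformGroup G] [CompactSpace G]

/-- The monad `X ↦ (G, 𝒰_G) × X` on the category of uniform spaces determined by a
compact group `G` with its (unique compatible, totally bounded and complete)
uniformity: the unit is `x ↦ (1, x)` and the multiplication is
`(g₁, (g₂, x)) ↦ (g₁ · g₂, x)`. -/
def huMonad : Monad UniformSpaceCat.{u} where
  obj X := UniformSpaceCat.of (G × X)
  map {X Y} f := ⟨Prod.map id f.hom.1, uniformContinuous_id.prodMap f.hom.2⟩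
  map_id X := UniformSpaceCat.hom_ext rfl
  map_comp f g := UniformSpaceCat.hom_ext rfl
  η :=
    { app := fun X => ⟨fun x => ((1 : G), x),
        uniformContinuous_const.prodMk uniformContinuous_id⟩
      naturality := fun X Y f => UniformSpaceCat.hom_ext rfl }
  μ :=
    { app := fun X => ⟨fun p => (p.1 * p.2.1, p.2.2),
        (uniformContinuous_mul.comp
          (uniformContinuous_fst.prodMk
            (uniformContinuous_fst.comp uniformContinuous_snd))).prodMk
          (uniformContinuous_snd.comp uniformContinuous_snd)⟩
      naturality := fun X Y f => UniformSpaceCat.hom_ext rfl }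
  assoc X := UniformSpaceCat.hom_ext (funext fun p => by
    show (_, _) = (_, _)
    dsimp
    first
    | exact Prod.ext (mul_assoc _ _ _) rfl
    | exact Prod.ext (mul_assoc _ _ _).symm rfl)
  left_unit X := UniformSpaceCat.hom_ext (funext fun p => by
    show (_, _) = p
    dsimp
    rw [one_mul]
    exact rfl)
  right_unit X := UniformSpaceCat.hom_ext (funext fun p => by
    show (_, _) = p
    dsimp
    exact Prod.ext (mul_one _) rfl)

end DFS

/-!
The underlying set of the colimit is the colimit `Y` of the underlying sets, on which `G` acts
because the transition maps are equivariant. Uniform continuity of the coprojections and of the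
action is preserved under infima of uniformities (the product uniformity is monotone in each
factor), so `Y` carries a finest uniformity with both properties. For a cocone with vertex `B`,
the pullback of the uniformity of `B` along the induced equivariant map `Y → B` is one of these
uniformities, hence coarser than the chosen one, which makes the induced map uniformly continuous.
-/

universe v

open scoped Uniformity

section UniformContinuousSMul

variable {M X : Type*} [UniformSpace M] [SMul M X]

theorem uniformContinuous_smul_sInf {us : Set (UniformSpace X)}
    (h : ∀ u ∈ us, UniformContinuous[@instUniformSpaceProd M X _ u, u]
      fun p : M × X => p.1 • p.2) :
    UniformContinuous[@instUniformSpaceProd M X _ (sInf us), sInf us]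
      fun p : M × X => p.1 • p.2 :=
  uniformContinuous_sInf_rng.2 fun u hu =>
    @UniformContinuous.comp _ _ _ (@instUniformSpaceProd M X _ (sInf us))
      (@instUniformSpaceProd M X _ u) u _ _ (h u hu)
      (@UniformContinuous.prodMap M X M X _ (sInf us) _ u id id uniformContinuous_id
        (uniformContinuous_sInf_dom hu uniformContinuous_id))

theorem uniformContinuous_smul_comap {Y : Type*} [UniformSpace Y] [SMul M Y] {φ : X → Y}
    (hφ : ∀ (c : M) (x : X), φ (c • x) = c • φ x)
    (h : UniformContinuous fun p : M × Y => p.1 • p.2) :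
    UniformContinuous[@instUniformSpaceProd M X _ (.comap φ ‹_›), .comap φ ‹_›]
      fun p : M × X => p.1 • p.2 := by
  let := UniformSpace.comap φ ‹_›
  refine uniformContinuous_comap' ?_
  simpa only [Function.comp_def, Prod.map_fst, Prod.map_snd, id, hφ] using
    h.comp (uniformContinuous_id.prodMap uniformContinuous_comap)

end UniformContinuousSMul

namespace DFS.huMonad

variable {G : Type u} [Group G] [UniformSpace G] [IsUniformGroup G]

instance (A : (huMonad G).Algebra) : MulAction G A.A where
  smul g x := A.a.hom.1 (g, x)
  one_smul := ConcreteCategory.congr_hom A.unit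
  mul_smul g₁ g₂ x := ConcreteCategory.congr_hom A.assoc (g₁, (g₂, x))

theorem Algebra.Hom.map_smul {A B : (huMonad G).Algebra} (f : A ⟶ B) (g : G) (x : A.A) :
    f.f (g • x) = g • f.f x :=
  (ConcreteCategory.congr_hom f.h (g, x)).symm

section Colimit

variable {J : Type u} [Category.{v} J] (D : J ⥤ (huMonad G).Algebra)

abbrev carrierDiagram : J ⥤ Type u where
  obj j := (D.obj j).A
  map f := TypeCat.ofHom (D.map f).f

def smulCoconeTypes (g : G) : (carrierDiagram D).CoconeTypes where
  pt := (carrierDiagram D).ColimitType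
  ι j x := (carrierDiagram D).ιColimitType j (g • x)
  ι_naturality f := funext fun x =>
    (congrArg ((carrierDiagram D).ιColimitType _) (Algebra.Hom.map_smul (D.map f) g x)).symm.trans
      ((carrierDiagram D).ιColimitType_map f (g • x))

instance : MulAction G (carrierDiagram D).ColimitType where
  smul g := (carrierDiagram D).descColimitType (smulCoconeTypes D g)
  one_smul y := by
    obtain ⟨j, x, rfl⟩ := (carrierDiagram D).ιColimitType_jointly_surjective y
    exact congrArg ((carrierDiagram D).ιColimitType j) (one_smul G x)
  mul_smul g₁ g₂ y := by
    obtain ⟨j, x, rfl⟩ := (carrierDiagram D).ιColimitType_jointly_surjective y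
    exact congrArg ((carrierDiagram D).ιColimitType j) (mul_smul g₁ g₂ x)

def admissibleUniformities : Set (UniformSpace (carrierDiagram D).ColimitType) :=
  {u | (∀ j, UniformContinuous[(D.obj j).A.str, u] ((carrierDiagram D).ιColimitType j)) ∧
    UniformContinuous[@instUniformSpaceProd G _ _ u, u] fun p : G × _ => p.1 • p.2}

abbrev colimitUniformity : UniformSpace (carrierDiagram D).ColimitType :=
  sInf (admissibleUniformities D)

theorem colimitUniformity_mem_admissibleUniformities :
    colimitUniformity D ∈ admissibleUniformities D :=
  ⟨fun j => uniformContinuous_sInf_rng.2 fun _ hu => hu.1 j,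
    uniformContinuous_smul_sInf fun _ hu => hu.2⟩

def colimitAlgebra : (huMonad G).Algebra where
  A := @UniformSpaceCat.of _ (colimitUniformity D)
  a := ⟨fun p => p.1 • p.2, (colimitUniformity_mem_admissibleUniformities D).2⟩
  unit := UniformSpaceCat.hom_ext (funext fun y : (carrierDiagram D).ColimitType => one_smul G y)
  assoc := UniformSpaceCat.hom_ext
    (funext fun p : G × G × (carrierDiagram D).ColimitType => mul_smul p.1 p.2.1 p.2.2)

def colimitCocone : Cocone D where
  pt := colimitAlgebra D
  ι.app j :=
    { f := ⟨(carrierDiagram D).ιColimitType j,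
        (colimitUniformity_mem_admissibleUniformities D).1 j⟩
      h := rfl }
  ι.naturality _ _ f := Monad.Algebra.Hom.ext (UniformSpaceCat.hom_ext
    (funext ((carrierDiagram D).ιColimitType_map f)))

section Desc

variable {D} (s : Cocone D)

def colimitDesc : (carrierDiagram D).ColimitType → s.pt.A :=
  (carrierDiagram D).descColimitType
    ((carrierDiagram D).coconeTypesEquiv.symm (((huMonad G).forget ⋙ forget _).mapCocone s))

theorem colimitDesc_smul (g : G) (y : (carrierDiagram D).ColimitType) :
    colimitDesc s (g • y) = g • colimitDesc s y := by
  obtain ⟨j, x, rfl⟩ := (carrierDiagram D).ιColimitType_jointly_surjective y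
  exact Algebra.Hom.map_smul (s.ι.app j) g x

theorem uniformContinuous_colimitDesc :
    UniformContinuous[colimitUniformity D, s.pt.A.str] (colimitDesc s) := by
  refine uniformContinuous_sInf_dom (u := .comap (colimitDesc s) s.pt.A.str) ⟨fun j => ?_, ?_⟩
    uniformContinuous_comap
  · exact uniformContinuous_comap' (s.ι.app j).f.hom.2
  · exact uniformContinuous_smul_comap (colimitDesc_smul s) s.pt.a.hom.2

end Desc

def isColimitColimitCocone : IsColimit (colimitCocone D) where
  desc s :=
    { f := ⟨colimitDesc s, uniformContinuous_colimitDesc s⟩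
      h := UniformSpaceCat.hom_ext (funext fun p => (colimitDesc_smul s p.1 p.2).symm) }
  fac _ _ := rfl
  uniq s m hm := Monad.Algebra.Hom.ext (UniformSpaceCat.hom_ext (funext fun y => by
    obtain ⟨j, x, rfl⟩ := (carrierDiagram D).ιColimitType_jointly_surjective y
    exact ConcreteCategory.congr_hom (congrArg Monad.Algebra.Hom.f (hm j)) x))

end Colimit

instance hasColimitsOfSize : HasColimitsOfSize.{v, u} (huMonad G).Algebra :=
  ⟨fun _ _ => ⟨fun D => ⟨⟨⟨colimitCocone D, isColimitColimitCocone D⟩⟩⟩⟩⟩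

end DFS.huMonad

theorem statement19_general (G : Type u) [Group G] [UniformSpace G] [IsUniformGroup G] :
    HasColimits (DFS.huMonad G).Algebra :=
  DFS.huMonad.hasColimitsOfSize

/-- For a compact topological group `G` with its unique compatible
uniformity, the Eilenberg–Moore category of algebras for the monad `X ↦ G × X` on
`Unif` (uniform spaces with a uniformly continuous `G`-action and uniformly
continuous equivariant maps) is cocomplete. -/
theorem statement19 (G : Type u) [Group G] [UniformSpace G] [IsUniformGroup G]
    [CompactSpace G] : HasColimits (DFS.huMonad G).Algebra :=
  statement19_general G
end
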